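/- arXiv:1505.05055 — 2 statements merged into one kernel-verified Lean document; each statement's English description precedes it below -/
import Mathlib

section
/- In a tree that is uniformly refined to level L, any contiguous segment of the Morton curve creates no more than two distinct face-connected subdomains. Precisely: for all a, b with 0 ≤ a ≤ b < 2^{dL}, the set of level-L quadrants {Q : a ≤ Q ≤ b} has at most two face-connected components. -/
/-!
If `a < b`, let `2^(j+1)` be the smallest aligned block containing both `a` and `b`; they lie in
its two halves `[m, m + 2^j)` and `[m + 2^j, m + 2^(j+1))`, so `[a, b]` is a suffix of the first
half followed by a prefix of the second, and it suffices to show that both pieces are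
face-connected.

Adding a multiple of `2^j` to a number below `2^j` involves no carries, so it translates every
coordinate and preserves face-adjacency; likewise `Q ↦ 2^j - 1 - Q` reflects every coordinate.
Hence block suffixes are reflected prefixes, and all pieces reduce to prefixes `[0, y)` of
`[0, 2^j)`. These are face-connected by induction on `j`: the part of `[0, y)` in the upper half
is a translated prefix, and the first cell `2^j` of the upper half is the face-neighbour, across
the halving hyperplane, of the cell `mortonBelow d j` of the full lower half.
-/

/-- The `r`-th coordinate (1 ≤ r ≤ d) of a level-`L` quadrant `Q` in dimension `d`. -/
def mortonCoord (d L r Q : ℕ) : ℕ :=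
  ∑ ℓ ∈ Finset.range L, (Q / 2 ^ (ℓ * d + (r - 1)) % 2) * 2 ^ ℓ

/-- Two level-`L` quadrants are face-neighbors: they differ by exactly one in exactly
one coordinate and agree in all other coordinates. -/
def MortonFaceNbr (d L Q Q' : ℕ) : Prop :=
  Q ≠ Q' ∧ ∃ r, 1 ≤ r ∧ r ≤ d ∧
    ((mortonCoord d L r Q : ℤ) - (mortonCoord d L r Q' : ℤ)).natAbs = 1 ∧
    ∀ s, 1 ≤ s → s ≤ d → s ≠ r → mortonCoord d L s Q = mortonCoord d L s Q'

/-- A set of level-`L` quadrants is face-connected: the graph on `S` whose edges join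
face-neighbors is connected. -/
def MortonFaceConnected (d L : ℕ) (S : Set ℕ) : Prop :=
  ∀ Q ∈ S, ∀ Q' ∈ S,
    Relation.ReflTransGen (fun a b => a ∈ S ∧ b ∈ S ∧ MortonFaceNbr d L a b) Q Q'

/-- `S` has at most `n` face-connected components: it can be written as a union of `n`
face-connected subsets. -/
def MortonCompBound (d L : ℕ) (S : Set ℕ) (n : ℕ) : Prop :=
  ∃ f : Fin n → Set ℕ, S = ⋃ i, f i ∧ ∀ i, MortonFaceConnected d L (f i)

namespace Nat

theorem testBit_sum_two_pow (s : Finset ℕ) (i : ℕ) : (∑ k ∈ s, 2 ^ k).testBit i ↔ i ∈ s := by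
  rw [← mem_bitIndices, ← List.mem_toFinset, Finset.toFinset_bitIndices_sum_two_pow]

theorem testBit_add_of_disjoint {x y : ℕ} (h : ∀ i, x.testBit i → ¬ y.testBit i) (i : ℕ) :
    (x + y).testBit i ↔ x.testBit i ∨ y.testBit i := by
  have hdisj : Disjoint x.bitIndices.toFinset y.bitIndices.toFinset := by
    simpa [Finset.disjoint_left] using h
  rw [← Finset.sum_toFinset_bitIndices_two_pow x, ← Finset.sum_toFinset_bitIndices_two_pow y,
    ← Finset.sum_union hdisj, testBit_sum_two_pow]
  simp

theorem testBit_two_pow_sub_one_sub {Q J : ℕ} (hQ : Q < 2 ^ J) (i : ℕ) :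
    (2 ^ J - 1 - Q).testBit i ↔ i < J ∧ ¬ Q.testBit i := by
  have hQJ : ∀ i, Q.testBit i → i < J := fun i hi => by
    by_contra h
    rw [testBit_eq_false_of_lt (hQ.trans_le (Nat.pow_le_pow_right two_pos (not_lt.1 h)))] at hi
    exact absurd hi (by decide)
  have hdisj : ∀ i, Q.testBit i → ¬ ((2 ^ J - 1) ^^^ Q).testBit i := by simp_all
  have hsum : Q + ((2 ^ J - 1) ^^^ Q) = 2 ^ J - 1 := eq_of_testBit_eq fun i => by
    apply Bool.eq_iff_iff.2
    rw [testBit_add_of_disjoint hdisj]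
    by_cases hi : Q.testBit i <;> simp [hi, hQJ]
  rw [show 2 ^ J - 1 - Q = (2 ^ J - 1) ^^^ Q by omega]
  by_cases hi : Q.testBit i <;> simp [hi, hQJ]

end Nat

open Finset

section Coordinates

variable {d L r : ℕ}

theorem mortonCoord_eq_sum_filter (d L r Q : ℕ) :
    mortonCoord d L r Q =
      ∑ ℓ ∈ (range L).filter (fun ℓ => Q.testBit (ℓ * d + (r - 1))), 2 ^ ℓ := by
  rw [mortonCoord, sum_filter]
  refine sum_congr rfl fun ℓ _ => ?_
  rw [← Nat.toNat_testBit]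
  cases Q.testBit (ℓ * d + (r - 1)) <;> simp

theorem mortonCoord_add {x y : ℕ} (h : ∀ i, x.testBit i → ¬ y.testBit i) :
    mortonCoord d L r (x + y) = mortonCoord d L r x + mortonCoord d L r y := by
  simp only [mortonCoord_eq_sum_filter, Nat.testBit_add_of_disjoint h, filter_or]
  exact sum_union (disjoint_filter.2 fun ℓ _ => h _)

theorem mortonCoord_add_of_dvd {J m p : ℕ} (hm : 2 ^ J ∣ m) (hp : p < 2 ^ J) :
    mortonCoord d L r (m + p) = mortonCoord d L r m + mortonCoord d L r p := by
  obtain ⟨t, rfl⟩ := hm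
  refine mortonCoord_add fun i hi hpi => ?_
  rw [Nat.testBit_two_pow_mul, Bool.and_eq_true, decide_eq_true_eq] at hi
  rw [Nat.testBit_eq_false_of_lt (hp.trans_le (Nat.pow_le_pow_right two_pos hi.1))] at hpi
  exact absurd hpi (by decide)

theorem mortonCoord_two_pow_sub_one_sub {J Q : ℕ} (hQ : Q < 2 ^ J) :
    mortonCoord d L r (2 ^ J - 1 - Q) + mortonCoord d L r Q = mortonCoord d L r (2 ^ J - 1) := by
  rw [← mortonCoord_add fun i h hQi => ((Nat.testBit_two_pow_sub_one_sub hQ i).1 h).2 hQi]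
  congr 1
  omega

end Coordinates

theorem Nat.mul_add_eq_iff {d ℓ s j : ℕ} (hs : s < d) : ℓ * d + s = j ↔ ℓ = j / d ∧ s = j % d := by
  rw [eq_comm (a := ℓ), eq_comm (a := s), Nat.div_mod_unique (by omega), add_comm, mul_comm]
  exact ⟨fun h => ⟨h, hs⟩, And.left⟩

theorem Nat.mul_add_mod_lt_iff {d ℓ j : ℕ} (hd : 0 < d) : ℓ * d + j % d < j ↔ ℓ < j / d := by
  have hj := Nat.div_add_mod' j d
  refine Iff.trans ?_ (Nat.mul_lt_mul_right hd)
  omega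

def mortonBelow (d j : ℕ) : ℕ := ∑ i ∈ (range j).filter (fun i => i % d = j % d), 2 ^ i

theorem mortonBelow_lt_two_pow (d j : ℕ) : mortonBelow d j < 2 ^ j :=
  Nat.geomSum_lt le_rfl fun i hi => by simp_all

section Bridge

variable {d L r j : ℕ}

theorem mortonCoord_two_pow (hj : j < d * L) (hr : 1 ≤ r) (hrd : r ≤ d) :
    mortonCoord d L r (2 ^ j) = if r = j % d + 1 then 2 ^ (j / d) else 0 := by
  have hjL : j / d < L := Nat.div_lt_of_lt_mul hj
  have hfilter : (range L).filter (fun ℓ => (2 ^ j).testBit (ℓ * d + (r - 1))) =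
      if r = j % d + 1 then {j / d} else ∅ := by
    ext ℓ
    simp only [mem_filter, mem_range, Nat.testBit_two_pow, decide_eq_true_eq, eq_comm (a := j),
      Nat.mul_add_eq_iff (show r - 1 < d by omega)]
    split_ifs
    · simp only [mem_singleton]; omega
    · simp only [notMem_empty, iff_false, not_and]; omega
  rw [mortonCoord_eq_sum_filter, hfilter]
  split_ifs <;> simp

theorem mortonCoord_mortonBelow (hj : j ≤ d * L) (hr : 1 ≤ r) (hrd : r ≤ d) :
    mortonCoord d L r (mortonBelow d j) = if r = j % d + 1 then 2 ^ (j / d) - 1 else 0 := by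
  have hjL : j / d ≤ L := Nat.div_le_of_le_mul hj
  have hfilter : (range L).filter (fun ℓ => (mortonBelow d j).testBit (ℓ * d + (r - 1))) =
      if r = j % d + 1 then range (j / d) else ∅ := by
    ext ℓ
    simp only [mortonBelow, mem_filter, mem_range, Nat.testBit_sum_two_pow]
    rw [Nat.mul_add_mod_self_right, Nat.mod_eq_of_lt (show r - 1 < d by omega)]
    split_ifs with hrj
    · subst hrj
      simp only [add_tsub_cancel_right, Nat.mul_add_mod_lt_iff (show 0 < d by omega), and_true,
        mem_range, and_iff_right_iff_imp]
      omega
    · simp only [notMem_empty, iff_false, not_and]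
      omega
  rw [mortonCoord_eq_sum_filter, hfilter]
  split_ifs
  · rw [Nat.geomSum_eq le_rfl]; simp
  · simp

end Bridge

section Neighbors

variable {d L : ℕ}

theorem MortonFaceNbr.symm {p q : ℕ} (h : MortonFaceNbr d L p q) : MortonFaceNbr d L q p := by
  obtain ⟨hne, r, hr, hrd, hpq, hother⟩ := h
  exact ⟨hne.symm, r, hr, hrd, by omega, fun s hs hsd hsr => (hother s hs hsd hsr).symm⟩

theorem MortonFaceNbr.of_natAbs_sub_eq {p q p' q' : ℕ} (h : MortonFaceNbr d L p q)
    (hcoord : ∀ r, 1 ≤ r → r ≤ d →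
      ((mortonCoord d L r p' : ℤ) - mortonCoord d L r q').natAbs =
        ((mortonCoord d L r p : ℤ) - mortonCoord d L r q).natAbs) :
    MortonFaceNbr d L p' q' := by
  obtain ⟨-, r, hr, hrd, hpq, hother⟩ := h
  have hr' := hcoord r hr hrd
  refine ⟨fun he => ?_, r, hr, hrd, hr'.trans hpq, fun s hs hsd hsr => ?_⟩
  · subst he; omega
  · have := hcoord s hs hsd
    have := hother s hs hsd hsr
    omega

theorem mortonFaceNbr_two_pow_mortonBelow {j : ℕ} (hj : j < d * L) :
    MortonFaceNbr d L (2 ^ j) (mortonBelow d j) := by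
  have hd : 0 < d := Nat.pos_of_mul_pos_right (by omega : 0 < d * L)
  have hjd : j % d + 1 ≤ d := Nat.mod_lt j hd
  refine ⟨(mortonBelow_lt_two_pow d j).ne', j % d + 1, by omega, hjd, ?_, ?_⟩
  · rw [mortonCoord_two_pow hj (by omega) hjd, mortonCoord_mortonBelow hj.le (by omega) hjd,
      if_pos rfl, if_pos rfl]
    have := Nat.one_le_two_pow (n := j / d)
    omega
  · intro s hs hsd hsj
    rw [mortonCoord_two_pow hj hs hsd, mortonCoord_mortonBelow hj.le hs hsd, if_neg hsj,
      if_neg hsj]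

theorem MortonFaceNbr.const_add {J m p q : ℕ} (hm : 2 ^ J ∣ m) (hp : p < 2 ^ J) (hq : q < 2 ^ J)
    (h : MortonFaceNbr d L p q) : MortonFaceNbr d L (m + p) (m + q) :=
  h.of_natAbs_sub_eq fun r _ _ => by
    rw [mortonCoord_add_of_dvd hm hp, mortonCoord_add_of_dvd hm hq]
    omega

theorem MortonFaceNbr.two_pow_sub_one_sub {J p q : ℕ} (hp : p < 2 ^ J) (hq : q < 2 ^ J)
    (h : MortonFaceNbr d L p q) : MortonFaceNbr d L (2 ^ J - 1 - p) (2 ^ J - 1 - q) :=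
  h.of_natAbs_sub_eq fun r _ _ => by
    have := mortonCoord_two_pow_sub_one_sub (d := d) (L := L) (r := r) hp
    have := mortonCoord_two_pow_sub_one_sub (d := d) (L := L) (r := r) hq
    omega

end Neighbors

section Connectivity

variable {d L : ℕ} {S T : Set ℕ}

theorem Set.Subsingleton.mortonFaceConnected (hS : S.Subsingleton) : MortonFaceConnected d L S :=
  fun _ hQ _ hQ' => hS hQ hQ' ▸ Relation.ReflTransGen.refl

theorem mortonFaceConnected_of_forall_reflTransGen (t : ℕ)
    (h : ∀ Q ∈ S, Relation.ReflTransGen (fun a b => a ∈ S ∧ b ∈ S ∧ MortonFaceNbr d L a b) Q t) :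
    MortonFaceConnected d L S := fun Q hQ Q' hQ' =>
  (h Q hQ).trans <| Relation.reflTransGen_swap.1 <|
    Relation.ReflTransGen.mono (fun _ _ ⟨ha, hb, hab⟩ => ⟨hb, ha, hab.symm⟩) _ _ (h Q' hQ')

theorem MortonFaceConnected.union (hS : MortonFaceConnected d L S)
    (hT : MortonFaceConnected d L T) {p q : ℕ} (hp : p ∈ S) (hq : q ∈ T)
    (hpq : MortonFaceNbr d L p q) : MortonFaceConnected d L (S ∪ T) := by
  refine mortonFaceConnected_of_forall_reflTransGen p fun Q hQ => ?_
  rcases hQ with hQ | hQ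
  · exact Relation.ReflTransGen.mono (fun _ _ ⟨ha, hb, hab⟩ => ⟨.inl ha, .inl hb, hab⟩) _ _
      (hS Q hQ p hp)
  · exact (Relation.ReflTransGen.mono (fun _ _ ⟨ha, hb, hab⟩ => ⟨.inr ha, .inr hb, hab⟩) _ _
      (hT Q hQ q hq)).tail ⟨.inr hq, .inl hp, hpq.symm⟩

theorem MortonFaceConnected.image (hS : MortonFaceConnected d L S) {f : ℕ → ℕ}
    (hf : ∀ p ∈ S, ∀ q ∈ S, MortonFaceNbr d L p q → MortonFaceNbr d L (f p) (f q)) :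
    MortonFaceConnected d L (f '' S) := by
  rintro _ ⟨p, hp, rfl⟩ _ ⟨q, hq, rfl⟩
  exact Relation.ReflTransGen.lift f
    (fun a b ⟨ha, hb, hab⟩ =>
      ⟨Set.mem_image_of_mem f ha, Set.mem_image_of_mem f hb, hf a ha b hb hab⟩)
    _ _ (hS p hp q hq)

theorem MortonFaceConnected.image_const_add {J m : ℕ} (hS : MortonFaceConnected d L S)
    (hS_lt : S ⊆ Set.Iio (2 ^ J)) (hm : 2 ^ J ∣ m) : MortonFaceConnected d L ((m + ·) '' S) :=
  hS.image fun _ hp _ hq => MortonFaceNbr.const_add hm (hS_lt hp) (hS_lt hq)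

theorem MortonFaceConnected.image_two_pow_sub_one_sub {J : ℕ} (hS : MortonFaceConnected d L S)
    (hS_lt : S ⊆ Set.Iio (2 ^ J)) : MortonFaceConnected d L ((2 ^ J - 1 - ·) '' S) :=
  hS.image fun _ hp _ hq => MortonFaceNbr.two_pow_sub_one_sub (hS_lt hp) (hS_lt hq)

end Connectivity

theorem Nat.image_const_add_Iio_sub (m y : ℕ) : (m + ·) '' Set.Iio (y - m) = Set.Ico m y := by
  ext x
  simp only [Set.mem_image, Set.mem_Iio, Set.mem_Ico]
  exact ⟨by rintro ⟨z, hz, rfl⟩; omega, fun hx => ⟨x - m, by omega, by omega⟩⟩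

theorem Nat.image_two_pow_sub_one_sub_Iio (J x : ℕ) :
    (2 ^ J - 1 - ·) '' Set.Iio (2 ^ J - x) = Set.Ico x (2 ^ J) := by
  have := Nat.one_le_two_pow (n := J)
  ext z
  simp only [Set.mem_image, Set.mem_Iio, Set.mem_Ico]
  exact ⟨by rintro ⟨w, hw, rfl⟩; omega, fun hz => ⟨2 ^ J - 1 - z, by omega, by omega⟩⟩

section Segments

variable {d L j : ℕ}

theorem mortonFaceConnected_Iio (hj : j ≤ d * L) {y : ℕ} (hy : y ≤ 2 ^ j) :
    MortonFaceConnected d L (Set.Iio y) := by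
  induction j generalizing y with
  | zero =>
    refine Set.Subsingleton.mortonFaceConnected fun p hp q hq => ?_
    simp only [pow_zero, Set.mem_Iio] at hy hp hq
    omega
  | succ j ih =>
    have hj' : j ≤ d * L := by omega
    rcases le_or_gt y (2 ^ j) with hyj | hyj
    · exact ih hj' hyj
    have hy' : y - 2 ^ j ≤ 2 ^ j := by rw [pow_succ, mul_two] at hy; omega
    rw [← Set.Iio_union_Ico_eq_Iio hyj.le, ← Nat.image_const_add_Iio_sub]
    exact (ih hj' le_rfl).union
      ((ih hj' hy').image_const_add (Set.Iio_subset_Iio hy') dvd_rfl)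
      (mortonBelow_lt_two_pow d j) ⟨0, Nat.sub_pos_of_lt hyj, add_zero _⟩
      (mortonFaceNbr_two_pow_mortonBelow (by omega)).symm

theorem mortonFaceConnected_Ico_two_pow (hj : j ≤ d * L) (x : ℕ) :
    MortonFaceConnected d L (Set.Ico x (2 ^ j)) := by
  rw [← Nat.image_two_pow_sub_one_sub_Iio]
  exact (mortonFaceConnected_Iio hj (Nat.sub_le _ _)).image_two_pow_sub_one_sub
    (Set.Iio_subset_Iio (Nat.sub_le _ _))

theorem mortonFaceConnected_Ico_of_dvd (hj : j ≤ d * L) {m y : ℕ} (hm : 2 ^ j ∣ m)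
    (hy : y ≤ m + 2 ^ j) : MortonFaceConnected d L (Set.Ico m y) := by
  rw [← Nat.image_const_add_Iio_sub]
  exact (mortonFaceConnected_Iio hj (by omega)).image_const_add
    (Set.Iio_subset_Iio (by omega)) hm

theorem mortonFaceConnected_Ico_add_two_pow (hj : j ≤ d * L) {m x : ℕ} (hm : 2 ^ j ∣ m)
    (hx : m ≤ x) : MortonFaceConnected d L (Set.Ico x (m + 2 ^ j)) := by
  rw [← Nat.add_sub_cancel' hx, ← Set.image_const_add_Ico]
  exact (mortonFaceConnected_Ico_two_pow hj _).image_const_add Set.Ico_subset_Iio_self hm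

end Segments

theorem exists_aligned_block_split {a b n : ℕ} (hab : a ≤ b) (hb : b < 2 ^ n) :
    ∃ j ≤ n, ∃ m, 2 ^ j ∣ m ∧ m ≤ a ∧ a ≤ m + 2 ^ j ∧ m + 2 ^ j ≤ b + 1 ∧
      b + 1 ≤ m + 2 ^ j + 2 ^ j := by
  rcases hab.eq_or_lt with rfl | hab
  · exact ⟨0, Nat.zero_le n, a, one_dvd a, le_rfl, by simp, by simp, by simp⟩
  have hn : a / 2 ^ n = b / 2 ^ n := by
    rw [Nat.div_eq_of_lt (hab.trans hb), Nat.div_eq_of_lt hb]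
  have hex : ∃ k, a / 2 ^ k = b / 2 ^ k := ⟨n, hn⟩
  obtain ⟨j, hj⟩ : ∃ j, Nat.find hex = j + 1 :=
    Nat.exists_eq_succ_of_ne_zero fun h => by
      have := Nat.find_spec hex
      rw [h, pow_zero, Nat.div_one, Nat.div_one] at this
      omega
  have hjn : j + 1 ≤ n := hj ▸ Nat.find_min' hex hn
  have hsame : a / 2 ^ j / 2 = b / 2 ^ j / 2 := by
    simpa only [Nat.div_div_eq_div_mul, ← pow_succ, ← hj] using Nat.find_spec hex
  have hdiff : a / 2 ^ j ≠ b / 2 ^ j := Nat.find_min hex (by omega)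
  have hmono : a / 2 ^ j ≤ b / 2 ^ j := Nat.div_le_div_right hab.le
  have hb' : b / 2 ^ j = a / 2 ^ j + 1 := by omega
  have ha₁ := Nat.mul_div_le a (2 ^ j)
  have ha₂ := Nat.lt_mul_div_succ a (Nat.two_pow_pos j)
  have hb₁ := Nat.mul_div_le b (2 ^ j)
  have hb₂ := Nat.lt_mul_div_succ b (Nat.two_pow_pos j)
  rw [hb'] at hb₁ hb₂
  simp only [mul_add, mul_one] at ha₂ hb₁ hb₂
  exact ⟨j, by omega, 2 ^ j * (a / 2 ^ j), dvd_mul_right _ _, ha₁, by omega, by omega, by omega⟩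

theorem morton_segment_at_most_two_components_general (d L a b : ℕ)
    (hab : a ≤ b) (hb : b < 2 ^ (d * L)) :
    MortonCompBound d L (Set.Icc a b) 2 := by
  obtain ⟨j, hj, m, hm, hma, ham, hmb, hbm⟩ := exists_aligned_block_split hab hb
  refine ⟨![Set.Ico a (m + 2 ^ j), Set.Ico (m + 2 ^ j) (b + 1)], ?_, ?_⟩
  · ext x
    simp only [Set.mem_Icc, Set.mem_iUnion, Fin.exists_fin_two, Matrix.cons_val_zero,
      Matrix.cons_val_one, Set.mem_Ico]
    omega
  · intro i
    fin_cases i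
    · exact mortonFaceConnected_Ico_add_two_pow hj hm hma
    · exact mortonFaceConnected_Ico_of_dvd hj (dvd_add hm dvd_rfl) hbm

/-- In a tree uniformly refined to level `L`, any contiguous segment of the Morton curve
has at most two face-connected components. -/
theorem morton_segment_at_most_two_components (d L a b : ℕ) (hd : 1 ≤ d)
    (hab : a ≤ b) (hb : b < 2 ^ (d * L)) :
    MortonCompBound d L (Set.Icc a b) 2 :=
  morton_segment_at_most_two_components_general d L a b hab hb
end

section
/- Let Q^start ≤ Q^end be level-L quadrants such that the bitwise and satisfies Q AND Q^end = Q for all Q with Q^start ≤ Q ≤ Q^end. Then the interior of Y = ⋃_{Q=Q^start}^{Q^end} Ω(Q) ⊆ ℝ^d is star-shaped. -/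
/-- The closed box `Ω(Q) = Π_r [2^{-L} Q_r, 2^{-L}(Q_r + 1)] ⊆ ℝ^d` occupied by the
level-`L` quadrant `Q`. -/
def mortonOmega (d L Q : ℕ) : Set (Fin d → ℝ) :=
  {x | ∀ r : Fin d,
    (mortonCoord d L ((r : ℕ) + 1) Q : ℝ) / 2 ^ L ≤ x r ∧
    x r ≤ ((mortonCoord d L ((r : ℕ) + 1) Q : ℝ) + 1) / 2 ^ L}

/-- `A ⊆ ℝ^d` is star-shaped with respect to `p`. -/
def StarShapedWrt {d : ℕ} (A : Set (Fin d → ℝ)) (p : Fin d → ℝ) : Prop :=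
  p ∈ A ∧ ∀ x ∈ A, segment ℝ p x ⊆ A

/-- `A ⊆ ℝ^d` is star-shaped with respect to some point of `A`. -/
def StarShaped {d : ℕ} (A : Set (Fin d → ℝ)) : Prop :=
  ∃ p, StarShapedWrt A p

/-!
Take `p` to be the centre of the cell `Ω(Qend)`. Every `Q` in the range is a bitwise submask
of `Qend`, so each Morton coordinate of `Q` is at most the corresponding one of `Qend`, and the
segment from `p` to a point of `Ω(Q)` stays in the box spanned by `Ω(Q)` and `Ω(Qend)`. Each
cell of that box has coordinates between those of `Q` and `Qend`; as Morton encoding is monotone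
in every coordinate, its index lies between `Q` and `Qend`. So the union is star-shaped with
respect to `p`, which is an interior point, and star-shapedness with respect to an interior
point passes to the interior.
-/

open Finset

namespace Nat

theorem div_two_pow_mod_two_le_one (a i : ℕ) : a / 2 ^ i % 2 ≤ 1 :=
  Nat.le_of_lt_succ (Nat.mod_lt _ two_pos)

theorem sum_bits_mul_two_pow_div_two_pow_mod_two {b : ℕ → ℕ} (hb : ∀ i, b i ≤ 1) (n j : ℕ) :
    (∑ i ∈ range n, b i * 2 ^ i) / 2 ^ j % 2 = if j < n then b j else 0 := by
  induction n generalizing b j with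
  | zero => simp
  | succ n ih =>
    have hsplit : ∑ i ∈ range (n + 1), b i * 2 ^ i
        = b 0 + 2 * ∑ i ∈ range n, b (i + 1) * 2 ^ i := by
      rw [sum_range_succ', mul_sum, add_comm]
      simp only [pow_succ, pow_zero, mul_one]
      congr 1
      exact sum_congr rfl fun i _ => by ring
    have hb0 := hb 0
    rcases j with _ | j
    · simp only [hsplit, pow_zero, Nat.div_one, Nat.add_mul_mod_self_left, lt_add_iff_pos_left,
        add_pos_iff, zero_lt_one, or_true, if_true]
      omega
    · rw [hsplit, pow_succ', ← Nat.div_div_eq_div_mul,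
        show (b 0 + 2 * ∑ i ∈ range n, b (i + 1) * 2 ^ i) / 2 = ∑ i ∈ range n, b (i + 1) * 2 ^ i
          by omega, ih fun i => hb (i + 1)]
      simp

theorem sum_range_div_two_pow_mod_two_mul_two_pow (a n : ℕ) :
    ∑ i ∈ range n, a / 2 ^ i % 2 * 2 ^ i = a % 2 ^ n := by
  induction n with
  | zero => simp [Nat.mod_one]
  | succ n ih =>
    rw [sum_range_succ, ih, pow_succ, Nat.mod_mul]
    ring

theorem mod_two_pow_div_two_pow_mod_two {a n i : ℕ} (hi : i < n) :
    a % 2 ^ n / 2 ^ i % 2 = a / 2 ^ i % 2 := by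
  rw [← sum_range_div_two_pow_mod_two_mul_two_pow,
    sum_bits_mul_two_pow_div_two_pow_mod_two (div_two_pow_mod_two_le_one a), if_pos hi]

theorem sum_bits_mul_two_pow_lt {b : ℕ → ℕ} (hb : ∀ i, b i ≤ 1) (n : ℕ) :
    ∑ i ∈ range n, b i * 2 ^ i < 2 ^ n :=
  (sum_le_sum fun i _ => mul_le_of_le_one_left (Nat.zero_le _) (hb i)).trans_lt
    (Nat.geomSum_lt le_rfl fun _ => mem_range.mp)

theorem div_two_pow_mod_two_le_of_and_eq {a b : ℕ} (h : a &&& b = a) (i : ℕ) :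
    a / 2 ^ i % 2 ≤ b / 2 ^ i % 2 := by
  have hbit := congrArg (·.testBit i) h
  rw [Nat.testBit_and] at hbit
  simp only [Nat.testBit_eq_decide_div_mod_eq] at hbit
  have := div_two_pow_mod_two_le_one a i
  have := div_two_pow_mod_two_le_one b i
  by_cases ha : a / 2 ^ i % 2 = 1 <;> by_cases hb : b / 2 ^ i % 2 = 1 <;> simp_all

theorem sum_range_div_two_pow_mod_two_mul_le_of_le {w : ℕ → ℕ}
    (hw : ∀ n, ∑ i ∈ range n, w i < w n) {n a a' : ℕ} (h : a ≤ a') (h' : a' < 2 ^ n) :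
    ∑ i ∈ range n, a / 2 ^ i % 2 * w i ≤ ∑ i ∈ range n, a' / 2 ^ i % 2 * w i := by
  induction n generalizing a a' with
  | zero => simp
  | succ n ih =>
    have hlow (x : ℕ) : ∑ i ∈ range n, x % 2 ^ n / 2 ^ i % 2 * w i
        = ∑ i ∈ range n, x / 2 ^ i % 2 * w i :=
      sum_congr rfl fun i hi => by rw [mod_two_pow_div_two_pow_mod_two (mem_range.mp hi)]
    have hpos := Nat.two_pow_pos n
    have htop : a / 2 ^ n ≤ a' / 2 ^ n := Nat.div_le_div_right h
    have htop' : a' / 2 ^ n < 2 := Nat.div_lt_of_lt_mul (by rwa [← pow_succ])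
    rw [sum_range_succ, sum_range_succ, Nat.mod_eq_of_lt htop', Nat.mod_eq_of_lt (by omega)]
    rcases htop.eq_or_lt with heq | hlt
    · have hmod : a % 2 ^ n ≤ a' % 2 ^ n := by
        have := Nat.div_add_mod a (2 ^ n)
        have := Nat.div_add_mod a' (2 ^ n)
        rw [heq] at *
        omega
      have := ih hmod (Nat.mod_lt _ hpos)
      rw [hlow, hlow] at this
      rw [heq]
      omega
    · -- the top digit of `a'` outweighs all lower digits of `a`
      have hsmall : ∑ i ∈ range n, a / 2 ^ i % 2 * w i ≤ ∑ i ∈ range n, w i :=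
        sum_le_sum fun i _ =>
          mul_le_of_le_one_left (Nat.zero_le _) (div_two_pow_mod_two_le_one a i)
      have := hw n
      have h0 : a / 2 ^ n = 0 := Nat.lt_one_iff.mp (by omega)
      have h1 : a' / 2 ^ n = 1 := by omega
      rw [h0, h1]
      omega

end Nat

theorem Finset.sum_range_sum_range_mul_add {M : Type*} [AddCommMonoid M] (f : ℕ → M) (d L : ℕ) :
    ∑ r ∈ range d, ∑ ℓ ∈ range L, f (ℓ * d + r) = ∑ i ∈ range (d * L), f i := by
  induction L with
  | zero => simp
  | succ L ih =>
    rw [Nat.mul_succ, sum_range_add, ← ih, ← sum_add_distrib]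
    simp only [sum_range_succ, add_comm (d * L), mul_comm L]

def mortonEncode (d L : ℕ) (k : ℕ → ℕ) : ℕ :=
  ∑ r ∈ range d, ∑ ℓ ∈ range L, k r / 2 ^ ℓ % 2 * 2 ^ (ℓ * d + r)

section MortonEncode

variable {d L : ℕ}

theorem mortonEncode_eq_sum_range (k : ℕ → ℕ) :
    mortonEncode d L k = ∑ i ∈ range (d * L), k (i % d) / 2 ^ (i / d) % 2 * 2 ^ i := by
  rw [mortonEncode, ← sum_range_sum_range_mul_add]
  refine sum_congr rfl fun r hr => sum_congr rfl fun ℓ _ => ?_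
  have hr : r < d := mem_range.mp hr
  rw [Nat.mul_comm ℓ, Nat.mul_add_mod, Nat.mod_eq_of_lt hr, Nat.mul_add_div (by omega),
    Nat.div_eq_of_lt hr, Nat.add_zero]

theorem mortonEncode_div_two_pow_mod_two (k : ℕ → ℕ) {r ℓ : ℕ} (hr : r < d) (hℓ : ℓ < L) :
    mortonEncode d L k / 2 ^ (ℓ * d + r) % 2 = k r / 2 ^ ℓ % 2 := by
  have hi : ℓ * d + r < d * L := by nlinarith
  rw [mortonEncode_eq_sum_range,
    Nat.sum_bits_mul_two_pow_div_two_pow_mod_two (fun i => Nat.div_two_pow_mod_two_le_one _ _),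
    if_pos hi, Nat.mul_comm ℓ, Nat.mul_add_mod, Nat.mod_eq_of_lt hr, Nat.mul_add_div (by omega),
    Nat.div_eq_of_lt hr, Nat.add_zero]

theorem mortonCoord_succ (r Q : ℕ) :
    mortonCoord d L (r + 1) Q = ∑ ℓ ∈ range L, Q / 2 ^ (ℓ * d + r) % 2 * 2 ^ ℓ := by
  simp only [mortonCoord, Nat.add_sub_cancel]

theorem mortonCoord_lt (r Q : ℕ) : mortonCoord d L r Q < 2 ^ L :=
  Nat.sum_bits_mul_two_pow_lt (fun _ => Nat.div_two_pow_mod_two_le_one _ _) L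

theorem mortonCoord_div_two_pow_mod_two (r Q : ℕ) {ℓ : ℕ} (hℓ : ℓ < L) :
    mortonCoord d L (r + 1) Q / 2 ^ ℓ % 2 = Q / 2 ^ (ℓ * d + r) % 2 := by
  rw [mortonCoord_succ,
    Nat.sum_bits_mul_two_pow_div_two_pow_mod_two (fun _ => Nat.div_two_pow_mod_two_le_one _ _),
    if_pos hℓ]

theorem mortonCoord_mortonEncode (k : ℕ → ℕ) {r : ℕ} (hr : r < d) (hk : k r < 2 ^ L) :
    mortonCoord d L (r + 1) (mortonEncode d L k) = k r := by
  rw [mortonCoord_succ, ← Nat.mod_eq_of_lt hk, ← Nat.sum_range_div_two_pow_mod_two_mul_two_pow]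
  exact sum_congr rfl fun ℓ hℓ => by
    rw [mortonEncode_div_two_pow_mod_two k hr (mem_range.mp hℓ)]

theorem mortonEncode_mortonCoord {Q : ℕ} (hQ : Q < 2 ^ (d * L)) :
    mortonEncode d L (fun r => mortonCoord d L (r + 1) Q) = Q := by
  rw [mortonEncode_eq_sum_range]
  conv_rhs => rw [← Nat.mod_eq_of_lt hQ, ← Nat.sum_range_div_two_pow_mod_two_mul_two_pow]
  refine sum_congr rfl fun i hi => ?_
  have hiL : i / d < L := Nat.div_lt_of_lt_mul (mem_range.mp hi)
  rw [mortonCoord_div_two_pow_mod_two _ _ hiL, Nat.div_add_mod']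

theorem mortonEncode_mono {k k' : ℕ → ℕ} (h : ∀ r < d, k r ≤ k' r)
    (h' : ∀ r < d, k' r < 2 ^ L) : mortonEncode d L k ≤ mortonEncode d L k' := by
  refine sum_le_sum fun r hr => Nat.sum_range_div_two_pow_mod_two_mul_le_of_le (fun n => ?_)
    (h r (mem_range.mp hr)) (h' r (mem_range.mp hr))
  have hd : 2 ≤ 2 ^ d := Nat.le_self_pow (by have := mem_range.mp hr; omega) 2
  simp only [pow_add, pow_mul', ← sum_mul]
  exact Nat.mul_lt_mul_of_pos_right (Nat.geomSum_lt hd fun _ => mem_range.mp) (by positivity)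

theorem mortonCoord_le_of_and_eq {r Q M : ℕ} (h : Q &&& M = Q) :
    mortonCoord d L r Q ≤ mortonCoord d L r M :=
  sum_le_sum fun _ _ => Nat.mul_le_mul_right _ (Nat.div_two_pow_mod_two_le_of_and_eq h _)

end MortonEncode

theorem exists_nat_mem_Icc_div {a b : ℕ} (hab : a ≤ b) {c t : ℝ} (hc : 0 < c)
    (ht : t ∈ Set.Icc (a / c) ((b + 1) / c)) :
    ∃ k : ℕ, a ≤ k ∧ k ≤ b ∧ t ∈ Set.Icc (k / c) ((k + 1) / c) := by
  rw [Set.mem_Icc, div_le_iff₀ hc, le_div_iff₀ hc] at ht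
  have hfloor : (⌊t * c⌋₊ : ℝ) ≤ t * c := Nat.floor_le ((Nat.cast_nonneg a).trans ht.1)
  rcases le_or_gt ⌊t * c⌋₊ b with hb | hb
  · refine ⟨⌊t * c⌋₊, Nat.le_floor ht.1, hb, ?_⟩
    rw [Set.mem_Icc, div_le_iff₀ hc, le_div_iff₀ hc]
    exact ⟨hfloor, (Nat.lt_floor_add_one _).le⟩
  · refine ⟨b, hab, le_rfl, ?_⟩
    rw [Set.mem_Icc, div_le_iff₀ hc, le_div_iff₀ hc]
    exact ⟨(Nat.cast_le.mpr hb.le).trans hfloor, ht.2⟩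

def mortonBox (d L Q M : ℕ) : Set (Fin d → ℝ) :=
  Set.univ.pi fun r => Set.Icc ((mortonCoord d L ((r : ℕ) + 1) Q : ℝ) / 2 ^ L)
    (((mortonCoord d L ((r : ℕ) + 1) M : ℝ) + 1) / 2 ^ L)

section MortonBox

variable {d L : ℕ}

theorem mortonBox_self (Q : ℕ) : mortonBox d L Q Q = mortonOmega d L Q := by
  ext x
  simp only [mortonBox, mortonOmega, Set.mem_univ_pi, Set.mem_Icc, Set.mem_ofPred_eq]

theorem convex_mortonBox (Q M : ℕ) : Convex ℝ (mortonBox d L Q M) :=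
  convex_pi fun _ _ => convex_Icc _ _

theorem mortonBox_mono {Q M Q' M' : ℕ}
    (hQ : ∀ r, mortonCoord d L r Q ≤ mortonCoord d L r Q')
    (hM : ∀ r, mortonCoord d L r M' ≤ mortonCoord d L r M) :
    mortonBox d L Q' M' ⊆ mortonBox d L Q M :=
  Set.pi_mono fun r _ => Set.Icc_subset_Icc (by gcongr; exact hQ _) (by gcongr; exact hM _)

theorem center_mem_interior_mortonOmega (Q : ℕ) :
    (fun r : Fin d => ((mortonCoord d L ((r : ℕ) + 1) Q : ℝ) + 1 / 2) / 2 ^ L)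
      ∈ interior (mortonOmega d L Q) := by
  rw [← mortonBox_self, mortonBox, interior_pi_set Set.finite_univ]
  intro r _
  dsimp only
  rw [interior_Icc]
  constructor <;> gcongr <;> norm_num

theorem mortonBox_subset_biUnion_mortonOmega {Q M : ℕ} (hM : M < 2 ^ (d * L))
    (hQM : Q &&& M = Q) :
    mortonBox d L Q M ⊆ ⋃ Q' ∈ Set.Icc Q M, mortonOmega d L Q' := by
  intro y hy
  have hcoord (r : ℕ) : mortonCoord d L r Q ≤ mortonCoord d L r M :=
    mortonCoord_le_of_and_eq hQM
  have hcell (r : Fin d) :=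
    exists_nat_mem_Icc_div (hcoord (r + 1)) (by positivity) (hy r trivial)
  choose k hkQ hkM hky using hcell
  let K : ℕ → ℕ := fun r => if h : r < d then k ⟨r, h⟩ else 0
  have hK (r : Fin d) : K r = k r := dif_pos r.isLt
  have hQK (r : ℕ) (hr : r < d) : mortonCoord d L (r + 1) Q ≤ K r := by
    rw [hK ⟨r, hr⟩]
    exact hkQ ⟨r, hr⟩
  have hKM (r : ℕ) (hr : r < d) : K r ≤ mortonCoord d L (r + 1) M := by
    rw [hK ⟨r, hr⟩]
    exact hkM ⟨r, hr⟩
  have hKlt (r : ℕ) (hr : r < d) : K r < 2 ^ L := (hKM r hr).trans_lt (mortonCoord_lt _ _)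
  refine Set.mem_biUnion (x := mortonEncode d L K) ⟨?_, ?_⟩ fun r => ?_
  · calc Q = mortonEncode d L (fun r => mortonCoord d L (r + 1) Q) :=
          (mortonEncode_mortonCoord ((hQM ▸ Nat.and_le_right : Q ≤ M).trans_lt hM)).symm
      _ ≤ mortonEncode d L K := mortonEncode_mono hQK hKlt
  · calc mortonEncode d L K ≤ mortonEncode d L (fun r => mortonCoord d L (r + 1) M) :=
          mortonEncode_mono hKM fun _ _ => mortonCoord_lt _ _
      _ = M := mortonEncode_mortonCoord hM
  · rw [mortonCoord_mortonEncode K r.isLt (hKlt r r.isLt), hK]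
    exact hky r

end MortonBox

theorem StarConvex.interior {𝕜 E : Type*} [Field 𝕜] [LinearOrder 𝕜] [IsStrictOrderedRing 𝕜]
    [AddCommGroup E] [Module 𝕜 E] [TopologicalSpace E] [IsTopologicalAddGroup E]
    [ContinuousConstSMul 𝕜 E] {s : Set E} {p : E} (hs : StarConvex 𝕜 p s)
    (hp : p ∈ interior s) : StarConvex 𝕜 p (interior s) := by
  intro x hx a b ha hb hab
  rcases hb.eq_or_lt with rfl | hb
  · simpa [show a = 1 by simpa using hab] using hp
  -- the homothety with centre `p` and ratio `b ≠ 0` is open and maps `interior s` into `s`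
  have hopen : IsOpenMap fun z : E => a • p + b • z :=
    (isOpenMap_add_left _).comp (isOpenMap_smul₀ hb.ne')
  refine interior_maximal ?_ (hopen _ isOpen_interior) ⟨x, hx, rfl⟩
  rintro _ ⟨z, hz, rfl⟩
  exact hs (interior_subset hz) ha hb.le hab

theorem morton_and_union_starshaped_general (d L Qstart Qend : ℕ)
    (hle : Qstart ≤ Qend) (hQend : Qend < 2 ^ (d * L))
    (hand : ∀ Q, Qstart ≤ Q → Q ≤ Qend → Q &&& Qend = Q) :
    StarShaped (interior (⋃ Q ∈ Set.Icc Qstart Qend, mortonOmega d L Q)) := by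
  set Y := ⋃ Q ∈ Set.Icc Qstart Qend, mortonOmega d L Q
  set p : Fin d → ℝ := fun r => ((mortonCoord d L ((r : ℕ) + 1) Qend : ℝ) + 1 / 2) / 2 ^ L
  have hp : p ∈ interior (mortonOmega d L Qend) := center_mem_interior_mortonOmega Qend
  have hpY : p ∈ interior Y :=
    interior_mono (Set.subset_biUnion_of_mem (u := mortonOmega d L)
      (Set.right_mem_Icc.mpr hle)) hp
  have hY : StarConvex ℝ p Y := by
    refine starConvex_iff_segment_subset.mpr fun x hx => ?_
    obtain ⟨Q, ⟨hQs, hQe⟩, hxQ⟩ := Set.mem_iUnion₂.mp hx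
    have hQ := hand Q hQs hQe
    have hcoord (r : ℕ) := mortonCoord_le_of_and_eq (d := d) (L := L) (r := r) hQ
    calc segment ℝ p x ⊆ mortonBox d L Q Qend :=
          (convex_mortonBox Q Qend).segment_subset
            (mortonBox_mono hcoord (fun _ => le_rfl)
              ((mortonBox_self Qend).symm ▸ interior_subset hp))
            (mortonBox_mono (fun _ => le_rfl) hcoord ((mortonBox_self Q).symm ▸ hxQ))
      _ ⊆ ⋃ Q' ∈ Set.Icc Q Qend, mortonOmega d L Q' :=
          mortonBox_subset_biUnion_mortonOmega hQend hQ
      _ ⊆ Y := Set.biUnion_subset_biUnion_left (Set.Icc_subset_Icc_left hQs)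
  exact ⟨p, hpY, fun x hx => (hY.interior hpY).segment_subset hx⟩

/-- If `Q &&& Qend = Q` (bitwise and) for all `Q` in `{Qstart, …, Qend}`, then the
interior of `Y = ⋃_{Q=Qstart}^{Qend} Ω(Q)` is star-shaped. -/
theorem morton_and_union_starshaped (d L Qstart Qend : ℕ) (hd : 1 ≤ d)
    (hle : Qstart ≤ Qend) (hQend : Qend < 2 ^ (d * L))
    (hand : ∀ Q, Qstart ≤ Q → Q ≤ Qend → Q &&& Qend = Q) :
    StarShaped (interior (⋃ Q ∈ Set.Icc Qstart Qend, mortonOmega d L Q)) :=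
  morton_and_union_starshaped_general d L Qstart Qend hle hQend hand
end
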